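/- arXiv:2308.03521 — 2 statements merged into one kernel-verified Lean document; each statement's English description precedes it below -/
import Mathlib

section
/- Let g_1,…,g_U, g ∈ ℝ^d with ‖g_i - g‖ ≤ δ_i, weights w_i ≥ 0 with Σ_i w_i = 1, participation indicators a_i ∈ {0,1} with S := Σ_i a_i w_i > 0, and participation weights w̃_i := a_i w_i / S. Then ‖Σ_i w̃_i g_i - Σ_i w_i g_i‖² ≤ 2(1 - S) Σ_i (w̃_i + w_i - 2 a_i w_i) δ_i². -/
theorem stmt_10 (d U : ℕ) (g : Fin U → EuclideanSpace ℝ (Fin d))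
    (gbar : EuclideanSpace ℝ (Fin d)) (δ w a : Fin U → ℝ)
    (hδ : ∀ i, ‖g i - gbar‖ ≤ δ i)
    (hw : ∀ i, 0 ≤ w i) (hw1 : ∑ i, w i = 1)
    (ha : ∀ i, a i = 0 ∨ a i = 1)
    (hS : 0 < ∑ i, a i * w i) :
    ‖(∑ i, (a i * w i / (∑ j, a j * w j)) • g i) - ∑ i, w i • g i‖ ^ 2
      ≤ 2 * (1 - ∑ j, a j * w j) *
        ∑ i, ((a i * w i / (∑ j, a j * w j)) + w i - 2 * a i * w i) * δ i ^ 2 := by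
  set S := ∑ j, a j * w j with hSdef
  have hδ0 : ∀ i, 0 ≤ δ i := fun i => le_trans (norm_nonneg _) (hδ i)
  have hSle : S ≤ 1 := by
    rw [← hw1]
    apply Finset.sum_le_sum
    intro i _
    rcases ha i with h | h <;> simp [h, hw i]
  set c : Fin U → ℝ := fun i => a i * w i / S - w i with hc
  have hsumwt : ∑ i, a i * w i / S = 1 := by
    rw [← Finset.sum_div, ← hSdef, div_self hS.ne']
  have hsumc : ∑ i, c i = 0 := by
    simp [hc, Finset.sum_sub_distrib, hsumwt, hw1]
  have key : (∑ i, (a i * w i / S) • g i) - ∑ i, w i • g i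
      = ∑ i, c i • (g i - gbar) := by
    simp only [hc, smul_sub, Finset.sum_sub_distrib, ← Finset.sum_smul, hsumc, zero_smul,
      sub_zero, sub_smul]
    rw [hsumwt, hw1]
    simp
  have hcoef : ∀ i, |c i| = (a i * w i / S) + w i - 2 * (a i * w i) := by
    intro i
    rcases ha i with h | h
    · simp only [hc, h, zero_mul, zero_div, zero_sub, abs_neg, abs_of_nonneg (hw i)]
      ring
    · have hnn : 0 ≤ w i / S - w i := by
        have : w i ≤ w i / S := by
          rw [le_div_iff₀ hS]
          nlinarith [hw i]
        linarith
      simp only [hc, h, one_mul, abs_of_nonneg hnn]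
      ring
  have h1 : ‖(∑ i, (a i * w i / S) • g i) - ∑ i, w i • g i‖ ≤ ∑ i, |c i| * δ i := by
    rw [key]
    refine le_trans (norm_sum_le _ _) (Finset.sum_le_sum fun i _ => ?_)
    rw [norm_smul, Real.norm_eq_abs]
    exact mul_le_mul_of_nonneg_left (hδ i) (abs_nonneg _)
  have h2 : (∑ i, |c i| * δ i) ^ 2 ≤ (∑ i, |c i|) * ∑ i, |c i| * δ i ^ 2 := by
    have := Finset.sum_mul_sq_le_sq_mul_sq Finset.univ
      (fun i => Real.sqrt (|c i|)) (fun i => Real.sqrt (|c i|) * δ i)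
    calc (∑ i, |c i| * δ i) ^ 2
        = (∑ i, Real.sqrt (|c i|) * (Real.sqrt (|c i|) * δ i)) ^ 2 := by
          congr 1
          refine Finset.sum_congr rfl fun i _ => ?_
          rw [← mul_assoc, Real.mul_self_sqrt (abs_nonneg _)]
      _ ≤ (∑ i, Real.sqrt (|c i|) ^ 2) * ∑ i, (Real.sqrt (|c i|) * δ i) ^ 2 := this
      _ = (∑ i, |c i|) * ∑ i, |c i| * δ i ^ 2 := by
          congr 1
          · exact Finset.sum_congr rfl fun i _ => Real.sq_sqrt (abs_nonneg _)
          · refine Finset.sum_congr rfl fun i _ => ?_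
            rw [mul_pow, Real.sq_sqrt (abs_nonneg _)]
  have hsumabs : ∑ i, |c i| = 2 * (1 - S) := by
    rw [Finset.sum_congr rfl fun i _ => hcoef i]
    have : ∑ i, ((a i * w i / S) + w i - 2 * (a i * w i))
        = (∑ i, a i * w i / S) + (∑ i, w i) - 2 * ∑ i, a i * w i := by
      rw [Finset.sum_sub_distrib, Finset.sum_add_distrib, Finset.mul_sum]
    rw [this, hsumwt, hw1, ← hSdef]
    ring
  calc ‖(∑ i, (a i * w i / S) • g i) - ∑ i, w i • g i‖ ^ 2
      ≤ (∑ i, |c i| * δ i) ^ 2 := by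
        apply pow_le_pow_left₀ (norm_nonneg _) h1
    _ ≤ (∑ i, |c i|) * ∑ i, |c i| * δ i ^ 2 := h2
    _ = 2 * (1 - S) * ∑ i, ((a i * w i / S) + w i - 2 * a i * w i) * δ i ^ 2 := by
        rw [hsumabs]
        congr 1
        refine Finset.sum_congr rfl fun i _ => ?_
        rw [hcoef i]; ring
end

section
/- Suppose F : ℝ^d → ℝ is convex and differentiable with β-Lipschitz gradient, θ* minimizes F, and ‖φ - θ*‖ ≤ B₁. Let φ⁺ = φ - η G̃ for some G̃ with ‖G̃ - ∇F(φ)‖ ≤ √A₂ and 0 < ηβ < 1. Then F(φ⁺) - F(φ) ≤ (η - η²β)√(2βA₂(F(φ) - F(θ*))) + (η²β/2)A₂ - ((2η - η²β)/(2B₁²))(F(φ) - F(θ*))². -/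
/-!
Write `g = ∇F(φ)`, `e = G̃ - g` and `Δ = F(φ) - F(θ*)`. The descent lemma for a `β`-smooth `F`,
applied to the step `-η (g + e)` and expanded, bounds `F(φ⁺) - F(φ)` by
`-(η - η²β/2)‖g‖² - (η - η²β)⟪g, e⟫ + (η²β/2)‖e‖²`. Three estimates then finish the proof:
`‖e‖² ≤ A₂`; `‖g‖² ≤ 2βΔ` (the descent lemma at the point `φ - g/β`, which is no lower than
`θ*`), which controls the cross term by Cauchy–Schwarz; and `Δ ≤ ⟪g, φ - θ*⟫ ≤ ‖g‖ B₁` by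
convexity, which turns the `‖g‖²` term into the `Δ²/B₁²` term.
-/

open Real InnerProductSpace Set

variable {E : Type*} [NormedAddCommGroup E] [InnerProductSpace ℝ E] [CompleteSpace E]
  {F : E → ℝ}

theorem hasDerivAt_comp_add_smul {x v : E} {t : ℝ} (hF : DifferentiableAt ℝ F (x + t • v)) :
    HasDerivAt (fun s : ℝ => F (x + s • v)) ⟪gradient F (x + t • v), v⟫_ℝ t := by
  have hline : HasDerivAt (fun s : ℝ => x + s • v) v t := by
    simpa using ((hasDerivAt_id t).smul_const v).const_add x
  exact (hasGradientAt_iff_hasFDerivAt.mp hF.hasGradientAt).comp_hasDerivAt t hline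

theorem ConvexOn.inner_gradient_le_sub (hconv : ConvexOn ℝ univ F) {x : E}
    (hF : DifferentiableAt ℝ F x) (y : E) :
    ⟪gradient F x, y - x⟫_ℝ ≤ F y - F x := by
  have hline : ConvexOn ℝ univ (fun s : ℝ => F (x + s • (y - x))) := by
    have : (fun s : ℝ => F (x + s • (y - x))) = F ∘ AffineMap.lineMap x y := by
      funext s
      simp [AffineMap.lineMap_apply, add_comm]
    rw [this]
    simpa using hconv.comp_affineMap (AffineMap.lineMap x y)
  have hderiv :=
    hasDerivAt_comp_add_smul (x := x) (v := y - x) (t := 0) (by rwa [zero_smul, add_zero])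
  rw [zero_smul, add_zero] at hderiv
  have := hline.le_slope_of_hasDerivAt (mem_univ 0) (mem_univ 1) one_pos hderiv
  simpa only [slope_def_field, zero_smul, one_smul, add_zero, add_sub_cancel, sub_zero,
    div_one] using this

theorem ConvexOn.sub_le_norm_gradient_mul_norm (hconv : ConvexOn ℝ univ F) {x : E}
    (hF : DifferentiableAt ℝ F x) (y : E) :
    F x - F y ≤ ‖gradient F x‖ * ‖x - y‖ :=
  calc F x - F y ≤ ⟪gradient F x, x - y⟫_ℝ := by
        have := hconv.inner_gradient_le_sub hF y
        rw [← neg_sub x y, inner_neg_right] at this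
        linarith
    _ ≤ ‖gradient F x‖ * ‖x - y‖ := real_inner_le_norm _ _

section Smooth

variable {β : ℝ} (hdiff : Differentiable ℝ F)
  (hlip : ∀ x y : E, ‖gradient F x - gradient F y‖ ≤ β * ‖x - y‖)
include hdiff hlip

theorem le_add_inner_gradient_add_sq (x y : E) :
    F y ≤ F x + ⟪gradient F x, y - x⟫_ℝ + β / 2 * ‖y - x‖ ^ 2 := by
  set v := y - x
  set g := gradient F x
  have hf : ∀ t, HasDerivAt (fun s : ℝ => F (x + s • v)) ⟪gradient F (x + t • v), v⟫_ℝ t :=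
    fun t => hasDerivAt_comp_add_smul (hdiff _)
  have hB : ∀ t, HasDerivAt (fun s : ℝ => F x + s * ⟪g, v⟫_ℝ + β / 2 * s ^ 2 * ‖v‖ ^ 2)
      (⟪g, v⟫_ℝ + β * t * ‖v‖ ^ 2) t := fun t => by
    refine ((((hasDerivAt_id' t).mul_const ⟪g, v⟫_ℝ).const_add (F x)).add
      (((hasDerivAt_pow 2 t).const_mul (β / 2)).mul_const (‖v‖ ^ 2))).congr_deriv ?_
    push_cast
    ring
  have hbound : ∀ t ∈ Ico (0 : ℝ) 1,
      ⟪gradient F (x + t • v), v⟫_ℝ ≤ ⟪g, v⟫_ℝ + β * t * ‖v‖ ^ 2 := by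
    rintro t ⟨ht, -⟩
    have hgrad : ‖gradient F (x + t • v) - g‖ ≤ β * t * ‖v‖ := by
      simpa [norm_smul, abs_of_nonneg ht, mul_assoc] using hlip (x + t • v) x
    calc ⟪gradient F (x + t • v), v⟫_ℝ
        = ⟪g, v⟫_ℝ + ⟪gradient F (x + t • v) - g, v⟫_ℝ := by rw [inner_sub_left]; ring
      _ ≤ ⟪g, v⟫_ℝ + ‖gradient F (x + t • v) - g‖ * ‖v‖ := by gcongr; exact real_inner_le_norm _ _
      _ ≤ ⟪g, v⟫_ℝ + β * t * ‖v‖ * ‖v‖ := by gcongr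
      _ = ⟪g, v⟫_ℝ + β * t * ‖v‖ ^ 2 := by ring
  have key := image_le_of_deriv_right_le_deriv_boundary
    (fun t _ => (hf t).continuousAt.continuousWithinAt) (fun t _ => (hf t).hasDerivWithinAt)
    (by simp) (fun t _ => (hB t).continuousAt.continuousWithinAt)
    (fun t _ => (hB t).hasDerivWithinAt) hbound (right_mem_Icc.mpr zero_le_one)
  simpa [v] using key

theorem norm_gradient_sq_le (hβ : 0 < β) {θ : E} (hmin : ∀ y, F θ ≤ F y) (x : E) :
    ‖gradient F x‖ ^ 2 ≤ 2 * β * (F x - F θ) := by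
  have h := le_add_inner_gradient_add_sq hdiff hlip x (x - β⁻¹ • gradient F x)
  rw [sub_sub_cancel_left, inner_neg_right, real_inner_smul_right, real_inner_self_eq_norm_sq,
    norm_neg, norm_smul, norm_inv, norm_of_nonneg hβ.le] at h
  have hθ := hmin (x - β⁻¹ • gradient F x)
  have hdecrease : ‖gradient F x‖ ^ 2 / (2 * β) ≤ F x - F θ := by
    have : F x + -(β⁻¹ * ‖gradient F x‖ ^ 2) + β / 2 * (β⁻¹ * ‖gradient F x‖) ^ 2
        = F x - ‖gradient F x‖ ^ 2 / (2 * β) := by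
      field_simp
      ring
    linarith
  rwa [div_le_iff₀ (by positivity), mul_comm] at hdecrease

theorem apply_sub_smul_sub_le (x G : E) (η : ℝ) :
    F (x - η • G) - F x ≤ (η - η ^ 2 * β) * -⟪gradient F x, G - gradient F x⟫_ℝ
      + η ^ 2 * β / 2 * ‖G - gradient F x‖ ^ 2
      - (2 * η - η ^ 2 * β) / 2 * ‖gradient F x‖ ^ 2 := by
  set g := gradient F x
  have h := le_add_inner_gradient_add_sq hdiff hlip x (x - η • G)
  have hG : G = g + (G - g) := (add_sub_cancel g G).symm
  rw [sub_sub_cancel_left, inner_neg_right, norm_neg, norm_smul, mul_pow, norm_eq_abs, sq_abs,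
    real_inner_smul_right, hG, inner_add_right, real_inner_self_eq_norm_sq, norm_add_sq_real,
    ← hG] at h
  linarith

end Smooth

theorem stmt_19_general (d : ℕ) (η β A₂ B₁ : ℝ)
    (hη : 0 < η) (hβ : 0 < β) (hηβ : η * β < 1) (hA₂ : 0 ≤ A₂)
    (F : EuclideanSpace ℝ (Fin d) → ℝ)
    (hconv : ConvexOn ℝ Set.univ F)
    (hdiff : Differentiable ℝ F)
    (hlip : ∀ x y : EuclideanSpace ℝ (Fin d), ‖gradient F x - gradient F y‖ ≤ β * ‖x - y‖)
    (θstar : EuclideanSpace ℝ (Fin d)) (hmin : ∀ x, F θstar ≤ F x)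
    (φ Gt : EuclideanSpace ℝ (Fin d))
    (hφB : ‖φ - θstar‖ ≤ B₁)
    (hGt : ‖Gt - gradient F φ‖ ≤ Real.sqrt A₂) :
    F (φ - η • Gt) - F φ
      ≤ (η - η ^ 2 * β) * Real.sqrt (2 * β * A₂ * (F φ - F θstar))
        + (η ^ 2 * β / 2) * A₂
        - ((2 * η - η ^ 2 * β) / (2 * B₁ ^ 2)) * (F φ - F θstar) ^ 2 := by
  set g := gradient F φ
  set Δ := F φ - F θstar
  have hΔ : 0 ≤ Δ := sub_nonneg.mpr (hmin φ)
  have hg : ‖g‖ ≤ √(2 * β * Δ) := le_sqrt_of_sq_le (norm_gradient_sq_le hdiff hlip hβ hmin φ)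
  have hcross : -⟪g, Gt - g⟫_ℝ ≤ √(2 * β * A₂ * Δ) :=
    calc -⟪g, Gt - g⟫_ℝ ≤ ‖g‖ * ‖Gt - g‖ :=
          neg_le.mp (neg_le_of_abs_le (abs_real_inner_le_norm _ _))
      _ ≤ √(2 * β * Δ) * √A₂ := by gcongr
      _ = √(2 * β * A₂ * Δ) := by rw [← sqrt_mul (by positivity)]; ring_nf
  have herr : ‖Gt - g‖ ^ 2 ≤ A₂ := (le_sqrt (norm_nonneg _) hA₂).mp hGt
  have hsubopt : Δ ^ 2 / B₁ ^ 2 ≤ ‖g‖ ^ 2 := by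
    have hB₁ : 0 ≤ B₁ := (norm_nonneg _).trans hφB
    refine div_le_of_le_mul₀ (by positivity) (by positivity) ?_
    rw [← mul_pow]
    gcongr
    exact (hconv.sub_le_norm_gradient_mul_norm (hdiff φ) θstar).trans (by gcongr)
  have hstep : 0 ≤ η - η ^ 2 * β := by nlinarith
  calc F (φ - η • Gt) - F φ
      ≤ (η - η ^ 2 * β) * -⟪g, Gt - g⟫_ℝ + η ^ 2 * β / 2 * ‖Gt - g‖ ^ 2
        - (2 * η - η ^ 2 * β) / 2 * ‖g‖ ^ 2 := apply_sub_smul_sub_le hdiff hlip φ Gt η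
    _ ≤ (η - η ^ 2 * β) * √(2 * β * A₂ * Δ) + η ^ 2 * β / 2 * A₂
        - (2 * η - η ^ 2 * β) / 2 * (Δ ^ 2 / B₁ ^ 2) := by
      gcongr
      nlinarith
    _ = _ := by ring

theorem stmt_19 (d : ℕ) (η β A₂ B₁ : ℝ)
    (hη : 0 < η) (hβ : 0 < β) (hηβ : η * β < 1) (hA₂ : 0 ≤ A₂) (hB₁ : 0 < B₁)
    (F : EuclideanSpace ℝ (Fin d) → ℝ)
    (hconv : ConvexOn ℝ Set.univ F)
    (hdiff : Differentiable ℝ F)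
    (hlip : ∀ x y : EuclideanSpace ℝ (Fin d), ‖gradient F x - gradient F y‖ ≤ β * ‖x - y‖)
    (θstar : EuclideanSpace ℝ (Fin d)) (hmin : ∀ x, F θstar ≤ F x)
    (φ Gt : EuclideanSpace ℝ (Fin d))
    (hφB : ‖φ - θstar‖ ≤ B₁)
    (hGt : ‖Gt - gradient F φ‖ ≤ Real.sqrt A₂) :
    F (φ - η • Gt) - F φ
      ≤ (η - η ^ 2 * β) * Real.sqrt (2 * β * A₂ * (F φ - F θstar))
        + (η ^ 2 * β / 2) * A₂
        - ((2 * η - η ^ 2 * β) / (2 * B₁ ^ 2)) * (F φ - F θstar) ^ 2 :=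
  stmt_19_general d η β A₂ B₁ hη hβ hηβ hA₂ F hconv hdiff hlip θstar hmin φ Gt hφB hGt
end
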